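/- arXiv:2007.03003 — 2 statements merged into one kernel-verified Lean document; each statement's English description precedes it below -/
import Mathlib

section
/- There is a bijection between the set of strongly separating locality relations ⊤ on the lattice G(ℝ²) of linear subspaces of ℝ² and the set of involutive maps ψ : [0, π) → [0, π) without fixed points; under this bijection ⊤ and ψ correspond if and only if for all θ, θ' ∈ [0, π): span{(cos θ, sin θ)} ⊤ span{(cos θ', sin θ')} ⟺ θ' = ψ(θ). -/
/-!
In a strongly separating locality relation the polar of `a` is the principal ideal of
`g a := grt(a^⊤)`, and the bipolar axiom makes `g` an involution with `a ⊓ g a = ⊥`. In `G(ℝ²)`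
every subspace is `0`, `ℝ²` or a line, the lines being the atoms; `g` swaps `0` and `ℝ²`, hence
permutes the lines, and without fixed points. Conversely a fixed-point-free involution `ψ` of the
lines gives the relation "`a = 0`, `b = 0` or `b = ψ a`". Finally `θ ↦ span{(cos θ, sin θ)}` is a
bijection from `[0, π)` onto the lines.
-/

/-- The line in `ℝ²` spanned by `(cos θ, sin θ)`. -/
noncomputable def line (θ : ℝ) : Submodule ℝ (Fin 2 → ℝ) :=
  Submodule.span ℝ {![Real.cos θ, Real.sin θ]}

/-- A strongly separating locality relation on a bounded lattice. -/
def IsStronglySepLoc {L : Type*} [Lattice L] [BoundedOrder L] (T : L → L → Prop) : Prop :=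
  (∀ a b : L, T a b → T b a) ∧
  (∀ a : L, IsLowerSet {x | T a x}) ∧
  (∀ a b c : L, T a b → T a c → T a (b ⊔ c)) ∧
  (∀ a b : L, T a b → a ⊓ b = ⊥) ∧
  (∀ a : L, ∃ g : L, IsGreatest {x | T a x} g) ∧
  (∀ a : L, IsGreatest {x | ∀ y : L, T a y → T y x} a)

section Polarity

variable {L : Type*} [Lattice L] [BoundedOrder L] {T : L → L → Prop}

theorem isStronglySepLoc_of_polar_eq_Iic (hsymm : ∀ a b, T a b → T b a)
    (hpolar : ∀ a, ∃ g, ∀ b, T a b ↔ b ≤ g) (hdisj : ∀ a b, T a b → a ⊓ b = ⊥)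
    (hbipolar : ∀ a x, (∀ y, T a y → T y x) → x ≤ a) : IsStronglySepLoc T := by
  refine ⟨hsymm, fun a => ?_, fun a b c => ?_, hdisj, fun a => ?_,
    fun a => ⟨fun y hy => hsymm a y hy, hbipolar a⟩⟩ <;> obtain ⟨g, hg⟩ := hpolar a
  · exact fun x y hyx hx => (hg y).2 (hyx.trans ((hg x).1 hx))
  · simp only [hg]
    exact sup_le
  · exact ⟨g, (hg g).2 le_rfl, fun x hx => (hg x).1 hx⟩

theorem IsStronglySepLoc.exists_involution (hT : IsStronglySepLoc T) :
    ∃ g : L → L, (∀ a b, T a b ↔ b ≤ g a) ∧ (∀ a, g (g a) = a) ∧ ∀ a, a ⊓ g a = ⊥ := by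
  obtain ⟨hsymm, hlower, -, hdisj, hgrt, hbipolar⟩ := hT
  choose g hg using hgrt
  have hpolar : ∀ a b, T a b ↔ b ≤ g a :=
    fun a b => ⟨fun h => (hg a).2 h, fun h => hlower a h (hg a).1⟩
  refine ⟨g, hpolar, fun a => ?_, fun a => hdisj a _ (hg a).1⟩
  refine ((hbipolar a).unique ⟨fun y hy => ?_, fun x hx => (hpolar _ _).1 (hx _ (hg a).1)⟩).symm
  have hy' : y ≤ g a := (hpolar a y).1 hy
  exact hsymm _ _ (hlower _ hy' (hsymm _ _ (hg (g a)).1))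

end Polarity

section Pairing

variable {L ι : Type*} [Lattice L] [BoundedOrder L] (f : ι ≃ {a : L // IsAtom a})

/-- The atoms are indexed by `ι` through `f`, so that `ψ` can live on the index set (for `G(ℝ²)`,
on the angles `[0, π)`). -/
def pairingRel (ψ : ι → ι) (a b : L) : Prop :=
  a = ⊥ ∨ b = ⊥ ∨ ∃ i, a = f i ∧ b = f (ψ i)

lemma eq_bot_or_eq_top_or_exists_eq_apply (hL : ∀ a : L, a = ⊥ ∨ a = ⊤ ∨ IsAtom a) (a : L) :
    a = ⊥ ∨ a = ⊤ ∨ ∃ i, a = f i := by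
  rcases hL a with h | h | h
  · exact Or.inl h
  · exact Or.inr (Or.inl h)
  · exact Or.inr (Or.inr ⟨f.symm ⟨a, h⟩, by simp⟩)

variable {f} (ψ : ι → ι)

lemma pairingRel_bot_left (b : L) : pairingRel f ψ ⊥ b := Or.inl rfl

lemma pairingRel_top_left_iff (htop : ¬IsAtom (⊤ : L)) (b : L) :
    pairingRel f ψ ⊤ b ↔ b = ⊥ := by
  refine ⟨?_, fun hb => Or.inr (Or.inl hb)⟩
  rintro (h | h | ⟨i, hi, -⟩)
  · exact le_bot_iff.mp (h ▸ le_top)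
  · exact h
  · exact absurd (hi ▸ (f i).2) htop

lemma pairingRel_apply_left_iff (i : ι) (b : L) :
    pairingRel f ψ (f i) b ↔ b = ⊥ ∨ b = f (ψ i) := by
  refine ⟨?_, fun h => h.elim (fun hb => Or.inr (Or.inl hb)) fun hb => Or.inr (Or.inr ⟨i, rfl, hb⟩)⟩
  rintro (h | h | ⟨j, hj, rfl⟩)
  · exact absurd h (f i).2.ne_bot
  · exact Or.inl h
  · rw [f.injective (Subtype.ext hj)]
    exact Or.inr rfl

lemma pairingRel_apply_iff (i j : ι) : pairingRel f ψ (f i) (f j) ↔ j = ψ i := by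
  rw [pairingRel_apply_left_iff, or_iff_right (f j).2.ne_bot, Subtype.coe_inj, f.apply_eq_iff_eq]

theorem isStronglySepLoc_pairingRel (hL : ∀ a : L, a = ⊥ ∨ a = ⊤ ∨ IsAtom a)
    (htop : ¬IsAtom (⊤ : L)) (hinv : ∀ i, ψ (ψ i) = i) (hfix : ∀ i, ψ i ≠ i) :
    IsStronglySepLoc (pairingRel f ψ) := by
  refine isStronglySepLoc_of_polar_eq_Iic ?_ (fun a => ?_) ?_ (fun a x hx => ?_)
  · rintro a b (h | h | ⟨i, rfl, rfl⟩)
    · exact Or.inr (Or.inl h)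
    · exact Or.inl h
    · exact Or.inr (Or.inr ⟨ψ i, rfl, by rw [hinv]⟩)
  · rcases eq_bot_or_eq_top_or_exists_eq_apply f hL a with rfl | rfl | ⟨i, rfl⟩
    · exact ⟨⊤, fun b => iff_of_true (pairingRel_bot_left ψ b) le_top⟩
    · exact ⟨⊥, fun b => (pairingRel_top_left_iff ψ htop b).trans le_bot_iff.symm⟩
    · exact ⟨f (ψ i), fun b => (pairingRel_apply_left_iff ψ i b).trans (f (ψ i)).2.le_iff.symm⟩
  · rintro a b (rfl | rfl | ⟨i, rfl, rfl⟩)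
    · exact bot_inf_eq _
    · exact inf_bot_eq _
    · exact ((f i).2.disjoint_of_ne (f (ψ i)).2
        (fun h => hfix i (f.injective (Subtype.ext h)).symm)).eq_bot
  · rcases eq_bot_or_eq_top_or_exists_eq_apply f hL a with rfl | rfl | ⟨i, rfl⟩
    · exact ((pairingRel_top_left_iff ψ htop x).1 (hx ⊤ (pairingRel_bot_left ψ ⊤))).le
    · exact le_top
    · have hpair := hx _ ((pairingRel_apply_left_iff ψ i _).2 (Or.inr rfl))
      rwa [pairingRel_apply_left_iff, hinv, ← (f i).2.le_iff] at hpair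

variable {T : L → L → Prop} (hL : ∀ a : L, a = ⊥ ∨ a = ⊤ ∨ IsAtom a) (htop : ¬IsAtom (⊤ : L))
include hL htop

variable (f) in
theorem IsStronglySepLoc.exists_eq_pairingRel (hT : IsStronglySepLoc T) :
    ∃ ψ : ι → ι, (∀ i, ψ (ψ i) = i) ∧ (∀ i, ψ i ≠ i) ∧ T = pairingRel f ψ := by
  obtain ⟨g, hpolar, hinv, hdisj⟩ := hT.exists_involution
  have hg_top : g ⊤ = ⊥ := by simpa using hdisj ⊤
  have hg_bot : g ⊥ = ⊤ := by rw [← hg_top, hinv]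
  have hatom : ∀ i, IsAtom (g (f i)) := by
    intro i
    rcases hL (g (f i)) with h | h | h
    · have hfi : (f i : L) = ⊤ := by rw [← hinv (f i), h, hg_bot]
      exact absurd (hfi ▸ (f i).2) htop
    · have hfi : (f i : L) = ⊥ := by rw [← hinv (f i), h, hg_top]
      exact absurd hfi (f i).2.ne_bot
    · exact h
  let ψ i := f.symm ⟨g (f i), hatom i⟩
  have hψ : ∀ i, (f (ψ i) : L) = g (f i) := by simp [ψ]
  refine ⟨ψ, fun i => f.injective (Subtype.ext ?_), fun i h => ?_, ?_⟩
  · rw [hψ, hψ, hinv]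
  · have hself := hdisj (f i)
    rw [← hψ, h, inf_idem] at hself
    exact (f i).2.ne_bot hself
  · funext a b
    rw [hpolar, eq_iff_iff]
    rcases eq_bot_or_eq_top_or_exists_eq_apply f hL a with rfl | rfl | ⟨i, rfl⟩
    · rw [hg_bot]
      exact iff_of_true le_top (pairingRel_bot_left ψ b)
    · rw [hg_top, le_bot_iff, pairingRel_top_left_iff ψ htop]
    · rw [← hψ, (f (ψ i)).2.le_iff, pairingRel_apply_left_iff]

theorem IsStronglySepLoc.eq_pairingRel_iff (hT : IsStronglySepLoc T) (ψ : ι → ι) :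
    T = pairingRel f ψ ↔ ∀ i j, T (f i) (f j) ↔ j = ψ i := by
  refine ⟨fun h => h ▸ pairingRel_apply_iff ψ, fun h => ?_⟩
  obtain ⟨ψ₀, -, -, rfl⟩ := hT.exists_eq_pairingRel f hL htop
  have hψ : ψ₀ = ψ := funext fun i => ((pairingRel_apply_iff ψ₀ i (ψ i)).1 ((h i (ψ i)).2 rfl)).symm
  rw [hψ]

variable (f) in
theorem exists_equiv_fixedPointFree_involutions :
    ∃ e : {T : L → L → Prop // IsStronglySepLoc T} ≃
        {ψ : ι → ι // (∀ i, ψ (ψ i) = i) ∧ ∀ i, ψ i ≠ i},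
      ∀ T ψ, e T = ψ ↔ ∀ i j, T.1 (f i) (f j) ↔ j = ψ.1 i := by
  let Φ (ψ : {ψ : ι → ι // (∀ i, ψ (ψ i) = i) ∧ ∀ i, ψ i ≠ i}) :
      {T : L → L → Prop // IsStronglySepLoc T} :=
    ⟨pairingRel f ψ.1, isStronglySepLoc_pairingRel ψ.1 hL htop ψ.2.1 ψ.2.2⟩
  have hΦ : Function.Bijective Φ := by
    refine ⟨fun ψ₁ ψ₂ h => Subtype.ext (funext fun i => ?_), fun T => ?_⟩
    · have h₁ : pairingRel f ψ₁.1 (f i) (f (ψ₁.1 i)) := (pairingRel_apply_iff _ _ _).2 rfl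
      rwa [show pairingRel f ψ₁.1 = pairingRel f ψ₂.1 from congrArg Subtype.val h,
        pairingRel_apply_iff] at h₁
    · obtain ⟨ψ, hinv, hfix, hT⟩ := T.2.exists_eq_pairingRel f hL htop
      exact ⟨⟨ψ, hinv, hfix⟩, Subtype.ext hT.symm⟩
  refine ⟨(Equiv.ofBijective Φ hΦ).symm, fun T ψ => ?_⟩
  rw [Equiv.symm_apply_eq, Subtype.ext_iff]
  exact T.2.eq_pairingRel_iff hL htop ψ.1

end Pairing

section PlaneLines

open Real Submodule Module

theorem Submodule.eq_bot_or_eq_top_or_isAtom_of_finrank_eq_two {K V : Type*} [DivisionRing K]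
    [AddCommGroup V] [Module K V] (hV : finrank K V = 2) (W : Submodule K V) :
    W = ⊥ ∨ W = ⊤ ∨ IsAtom W := by
  have : FiniteDimensional K V := .of_finrank_eq_succ hV
  have hW : finrank K W ≤ 2 := hV ▸ W.finrank_le
  interval_cases h : finrank K W
  · exact Or.inl (finrank_eq_zero.mp h)
  · exact Or.inr (Or.inr (isAtom_iff_finrank_eq_one.mpr h))
  · exact Or.inr (Or.inl (eq_top_of_finrank_eq (h.trans hV.symm)))

theorem Submodule.not_isAtom_top_of_finrank_eq_two {K V : Type*} [DivisionRing K]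
    [AddCommGroup V] [Module K V] (hV : finrank K V = 2) : ¬IsAtom (⊤ : Submodule K V) := by
  rw [isAtom_iff_finrank_eq_one, finrank_top, hV]
  norm_num

lemma cos_sin_ne_zero (θ : ℝ) : ![cos θ, sin θ] ≠ 0 := by
  intro h
  have hcos : cos θ = 0 := by simpa using congrFun h 0
  have hsin : sin θ = 0 := by simpa using congrFun h 1
  simpa [hcos, hsin] using sin_sq_add_cos_sq θ

lemma isAtom_line (θ : ℝ) : IsAtom (line θ) := nonzero_span_atom _ (cos_sin_ne_zero θ)

lemma line_add_int_mul_pi (θ : ℝ) (k : ℤ) : line (θ + k * π) = line θ := by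
  have hv : ![cos (θ + k * π), sin (θ + k * π)] = ((-1 : ℝ) ^ k) • ![cos θ, sin θ] := by
    rw [cos_add_int_mul_pi, sin_add_int_mul_pi]
    simp
  rw [line, line, hv, span_singleton_smul_eq (zpow_ne_zero k (by norm_num)).isUnit]

lemma line_injOn : Set.InjOn line (Set.Ico 0 π) := by
  intro θ hθ θ' hθ' h
  have hmem : ![cos θ, sin θ] ∈ line θ' := h ▸ mem_span_singleton_self _
  obtain ⟨c, hc⟩ := mem_span_singleton.mp hmem
  have hcos : c * cos θ' = cos θ := by simpa using congrFun hc 0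
  have hsin : c * sin θ' = sin θ := by simpa using congrFun hc 1
  have hsub : sin (θ - θ') = 0 := by
    rw [sin_sub, ← hcos, ← hsin]
    ring
  rw [sin_eq_zero_iff_of_lt_of_lt (by linarith [hθ.1, hθ'.2]) (by linarith [hθ.2, hθ'.1])] at hsub
  linarith

lemma exists_line_eq_span {v : Fin 2 → ℝ} (hv : v ≠ 0) : ∃ θ, line θ = span ℝ {v} := by
  set z : ℂ := ⟨v 0, v 1⟩
  have hz : z ≠ 0 := fun h => hv (by
    ext i
    fin_cases i
    · exact congrArg Complex.re h
    · exact congrArg Complex.im h)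
  have hpolar : v = ‖z‖ • ![cos z.arg, sin z.arg] := by
    ext i
    fin_cases i <;> simp [Complex.norm_mul_cos_arg, Complex.norm_mul_sin_arg, z]
  refine ⟨z.arg, ?_⟩
  rw [hpolar, span_singleton_smul_eq (isUnit_iff_ne_zero.mpr (norm_ne_zero_iff.mpr hz)), line]

lemma exists_mem_Ico_line_eq (θ : ℝ) : ∃ θ' ∈ Set.Ico 0 π, line θ' = line θ := by
  refine ⟨toIcoMod pi_pos 0 θ, toIcoMod_mem_Ico' _ _, ?_⟩
  rw [← line_add_int_mul_pi _ (toIcoDiv pi_pos 0 θ), ← zsmul_eq_mul, toIcoMod_add_toIcoDiv_zsmul]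

lemma exists_mem_Ico_line_eq_of_isAtom {W : Submodule ℝ (Fin 2 → ℝ)} (hW : IsAtom W) :
    ∃ θ ∈ Set.Ico 0 π, line θ = W := by
  obtain ⟨v, hv, rfl⟩ := (atom_iff_nonzero_span W).mp hW
  obtain ⟨θ, hθ⟩ := exists_line_eq_span hv
  obtain ⟨θ', hθ', hθθ'⟩ := exists_mem_Ico_line_eq θ
  exact ⟨θ', hθ', hθθ'.trans hθ⟩

noncomputable def lineEquiv : Set.Ico 0 π ≃ {W : Submodule ℝ (Fin 2 → ℝ) // IsAtom W} :=
  Equiv.ofBijective (fun θ => ⟨line θ, isAtom_line θ⟩)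
    ⟨fun θ θ' h => Subtype.ext (line_injOn θ.2 θ'.2 (congrArg Subtype.val h)), fun W =>
      let ⟨θ, hθ, hW⟩ := exists_mem_Ico_line_eq_of_isAtom W.2
      ⟨⟨θ, hθ⟩, Subtype.ext hW⟩⟩

end PlaneLines

/-- Strongly separating locality relations on `G(ℝ²)` are in one-one
correspondence with involutive fixed-point-free maps `ψ : [0, π) → [0, π)`, `⊤` and `ψ`
corresponding iff `span{(cos θ, sin θ)} ⊤ span{(cos θ', sin θ')} ↔ θ' = ψ(θ)`. -/
theorem stmt_14 :
    ∃ e : {T : Submodule ℝ (Fin 2 → ℝ) → Submodule ℝ (Fin 2 → ℝ) → Prop //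
            IsStronglySepLoc T} ≃
          {ψ : Set.Ico (0 : ℝ) Real.pi → Set.Ico (0 : ℝ) Real.pi //
            (∀ θ, ψ (ψ θ) = θ) ∧ (∀ θ, ψ θ ≠ θ)},
      ∀ T ψ, e T = ψ ↔
        ∀ θ θ' : Set.Ico (0 : ℝ) Real.pi,
          (T.1 (line (θ : ℝ)) (line (θ' : ℝ)) ↔ θ' = ψ.1 θ) :=
  have hV : Module.finrank ℝ (Fin 2 → ℝ) = 2 := by simp
  exists_equiv_fixedPointFree_involutions lineEquiv
    (Submodule.eq_bot_or_eq_top_or_isAtom_of_finrank_eq_two hV)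
    (Submodule.not_isAtom_top_of_finrank_eq_two hV)
end

section
/- Let V be a finite-dimensional vector space over a field K, ⊤_V a vector-space locality relation on V, and ⊤_{V,G} the induced relation on the subspace lattice G(V) defined by U ⊤_{V,G} W ⟺ (u ⊤_V w for all u ∈ U, w ∈ W). Then: (1) ⊤_V is non-degenerate if and only if ⊤_{V,G} is a lattice locality relation on G(V) with the separating property that U ⊤_{V,G} W implies U ∩ W = {0}; (2) ⊤_V is strongly non-degenerate if and only if ⊤_{V,G} is a strongly separating locality relation on G(V); in this case the map U ↦ U^{⊤_V} is an orthocomplementation on G(V). -/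
/-- An orthocomplementation on a lattice bounded from below. -/
def IsOrthocompl {L : Type*} [Lattice L] [OrderBot L] (Ψ : L → L) : Prop :=
  (∀ a b : L, b ≤ a → Ψ a ≤ Ψ b) ∧ (∀ a : L, Ψ (Ψ a) = a) ∧
  (∀ a b : L, b ≤ a → b ≤ Ψ a → b = ⊥)

/-!
The polar `U^⊤` of a subspace is again a subspace, and `U ⊤_G W` just says `W ≤ U^⊤`; so the
lattice properties of `⊤_G` are properties of the Galois connection `U ↦ U^⊤`, and
non-degeneracy is `U ⊓ U^⊤ = ⊥`. Under strong non-degeneracy also `U ⊔ U^⊤ = ⊤`, since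
`(U ⊔ U^⊤)^⊤ ≤ U^⊤ ⊓ U^⊤⊤ = ⊥`. Then `U ≤ U^⊤⊤` are two complements of `U^⊤`, so by the
modular law `U^⊤⊤ = U`. Conversely, a self-local vector `v` gives `Kv ⊤_G Kv`, and a proper `U`
with `U^⊤ = 0` would put `⊤` into the bipolar of `U`.
-/

structure IsVectorSpaceLocality (K : Type*) {V : Type*} [Semiring K] [AddCommMonoid V]
    [Module K V] (T : V → V → Prop) : Prop where
  symm : ∀ a b : V, T a b → T b a
  exists_submodule_eq_polar :
    ∀ X : Set V, ∃ W : Submodule K V, (W : Set V) = {v | ∀ x ∈ X, T x v}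

def subspaceRel (K : Type*) {V : Type*} [Semiring K] [AddCommMonoid V] [Module K V]
    (T : V → V → Prop) (U W : Submodule K V) : Prop :=
  ∀ u ∈ U, ∀ w ∈ W, T u w

namespace IsVectorSpaceLocality

section Semiring

variable {K V : Type*} [Semiring K] [AddCommMonoid V] [Module K V] {T : V → V → Prop}
  (hT : IsVectorSpaceLocality K T)

include hT

noncomputable def polar (X : Set V) : Submodule K V :=
  (hT.exists_submodule_eq_polar X).choose.copy {v | ∀ x ∈ X, T x v}
    (hT.exists_submodule_eq_polar X).choose_spec.symm

@[simp]
theorem mem_polar {X : Set V} {v : V} : v ∈ hT.polar X ↔ ∀ x ∈ X, T x v :=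
  Iff.rfl

theorem polar_anti {X Y : Set V} (hXY : X ⊆ Y) : hT.polar Y ≤ hT.polar X :=
  fun _ hv x hx => hv x (hXY hx)

theorem rel_zero_right (v : V) : T v 0 :=
  (hT.polar {v}).zero_mem v rfl

theorem rel_zero_left (v : V) : T 0 v :=
  hT.symm _ _ (hT.rel_zero_right v)

theorem subset_polar_polar (X : Set V) : X ⊆ hT.polar (hT.polar X) :=
  fun x hx _ hv => hT.symm _ _ (hv x hx)

theorem smul_rel_smul {u w : V} (h : T u w) (a b : K) : T (a • u) (b • w) := by
  have hu : u ∈ hT.polar {w} := by simpa using hT.symm _ _ h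
  have hw : w ∈ hT.polar {a • u} := by
    simpa using hT.symm _ _ ((hT.polar {w}).smul_mem a hu w rfl)
  exact (hT.polar {a • u}).smul_mem b hw _ rfl

theorem subspaceRel_iff_le_polar {U W : Submodule K V} : subspaceRel K T U W ↔ W ≤ hT.polar U :=
  ⟨fun h w hw u hu => h u hu w hw, fun h u hu _ hw => h hw u hu⟩

theorem setOf_subspaceRel (U : Submodule K V) :
    {W | subspaceRel K T U W} = Set.Iic (hT.polar U) :=
  Set.ext fun _ => hT.subspaceRel_iff_le_polar

theorem isLowerSet_setOf_subspaceRel (U : Submodule K V) : IsLowerSet {W | subspaceRel K T U W} :=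
  hT.setOf_subspaceRel U ▸ isLowerSet_Iic _

theorem subspaceRel_sup {U W₁ W₂ : Submodule K V} (h₁ : subspaceRel K T U W₁)
    (h₂ : subspaceRel K T U W₂) : subspaceRel K T U (W₁ ⊔ W₂) :=
  hT.subspaceRel_iff_le_polar.2 <|
    sup_le (hT.subspaceRel_iff_le_polar.1 h₁) (hT.subspaceRel_iff_le_polar.1 h₂)

theorem subspaceRel_symm {U W : Submodule K V} (h : subspaceRel K T U W) : subspaceRel K T W U :=
  fun w hw u hu => hT.symm _ _ (h u hu w hw)

theorem subspaceRel_bot (W : Submodule K V) : subspaceRel K T ⊥ W := by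
  rintro u hu w -
  rw [(Submodule.mem_bot K).1 hu]
  exact hT.rel_zero_left w

theorem subspaceRel_span_singleton_self {v : V} (hv : T v v) :
    subspaceRel K T (K ∙ v) (K ∙ v) := by
  intro u hu w hw
  obtain ⟨a, rfl⟩ := Submodule.mem_span_singleton.1 hu
  obtain ⟨b, rfl⟩ := Submodule.mem_span_singleton.1 hw
  exact hT.smul_rel_smul hv a b

theorem eq_zero_of_rel_self_of_subspaceRel_disjoint
    (hsep : ∀ U W : Submodule K V, subspaceRel K T U W → U ⊓ W = ⊥) {v : V} (hv : T v v) :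
    v = 0 := by
  have hspan := hsep _ _ (hT.subspaceRel_span_singleton_self hv)
  rw [inf_idem, Submodule.span_singleton_eq_bot] at hspan
  exact hspan

theorem inf_polar_eq_bot (hnd : ∀ v : V, T v v → v = 0) (U : Submodule K V) :
    U ⊓ hT.polar U = ⊥ :=
  eq_bot_iff.2 fun v hv => (Submodule.mem_bot K).2 (hnd v (hv.2 v hv.1))

theorem subspaceRel_disjoint (hnd : ∀ v : V, T v v → v = 0) {U W : Submodule K V}
    (h : subspaceRel K T U W) : U ⊓ W = ⊥ :=
  eq_bot_iff.2 <| (inf_le_inf_left U (hT.subspaceRel_iff_le_polar.1 h)).trans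
    (hT.inf_polar_eq_bot hnd U).le

theorem sup_polar_eq_top (hnd : ∀ v : V, T v v → v = 0)
    (hstrong : ∀ U : Submodule K V, U ≠ ⊤ → hT.polar U ≠ ⊥) (U : Submodule K V) :
    U ⊔ hT.polar U = ⊤ := by
  by_contra hne
  apply hstrong _ hne
  refine eq_bot_iff.2 (le_trans ?_ (hT.inf_polar_eq_bot hnd (hT.polar U)).le)
  exact le_inf (hT.polar_anti (SetLike.coe_subset_coe.2 le_sup_left))
    (hT.polar_anti (SetLike.coe_subset_coe.2 le_sup_right))

end Semiring

section Ring

variable {K V : Type*} [Ring K] [AddCommGroup V] [Module K V] {T : V → V → Prop}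
  (hT : IsVectorSpaceLocality K T)
include hT

theorem polar_polar_eq (hnd : ∀ v : V, T v v → v = 0)
    (hstrong : ∀ U : Submodule K V, U ≠ ⊤ → hT.polar U ≠ ⊥) (U : Submodule K V) :
    hT.polar (hT.polar U) = U := by
  refine (eq_of_le_of_inf_le_of_sup_le (z := hT.polar U) (hT.subset_polar_polar U) ?_ ?_).symm
  · rw [inf_comm, hT.inf_polar_eq_bot hnd]
    exact bot_le
  · rw [hT.sup_polar_eq_top hnd hstrong]
    exact le_top

theorem isStronglySepLoc_subspaceRel (hnd : ∀ v : V, T v v → v = 0)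
    (hstrong : ∀ U : Submodule K V, U ≠ ⊤ → hT.polar U ≠ ⊥) :
    IsStronglySepLoc (subspaceRel K T) := by
  refine ⟨fun _ _ => hT.subspaceRel_symm, hT.isLowerSet_setOf_subspaceRel,
    fun _ _ _ => hT.subspaceRel_sup, fun _ _ => hT.subspaceRel_disjoint hnd,
    fun U => ⟨hT.polar U, ?_⟩, fun U => ⟨?_, ?_⟩⟩
  · rw [hT.setOf_subspaceRel]
    exact isGreatest_Iic
  · exact fun _ => hT.subspaceRel_symm
  · intro W hW
    rw [← hT.polar_polar_eq hnd hstrong U, ← hT.subspaceRel_iff_le_polar]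
    exact hW _ (hT.subspaceRel_iff_le_polar.2 le_rfl)

theorem polar_ne_bot_of_isStronglySepLoc (h : IsStronglySepLoc (subspaceRel K T))
    {U : Submodule K V} (hU : U ≠ ⊤) : hT.polar U ≠ ⊥ := by
  intro hbot
  refine hU (top_le_iff.1 ((h.2.2.2.2.2 U).2 fun W hW => ?_))
  rw [hT.subspaceRel_iff_le_polar, hbot, le_bot_iff] at hW
  exact hW ▸ hT.subspaceRel_bot ⊤

theorem isOrthocompl_polar (hnd : ∀ v : V, T v v → v = 0)
    (hstrong : ∀ U : Submodule K V, U ≠ ⊤ → hT.polar U ≠ ⊥) :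
    IsOrthocompl fun U : Submodule K V => hT.polar U :=
  ⟨fun _ _ h => hT.polar_anti h, hT.polar_polar_eq hnd hstrong,
    fun U _ hWU hW => eq_bot_iff.2 <| (le_inf hWU hW).trans (hT.inf_polar_eq_bot hnd U).le⟩

end Ring

end IsVectorSpaceLocality

theorem stmt_17_general {K V : Type*} [Field K] [AddCommGroup V] [Module K V]
    (T : V → V → Prop)
    (hsym : ∀ a b : V, T a b → T b a)
    (hsub : ∀ X : Set V, ∃ W : Submodule K V, (W : Set V) = {v | ∀ x ∈ X, T x v})
    (TG : Submodule K V → Submodule K V → Prop)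
    (hTG : ∀ U W : Submodule K V, TG U W ↔ ∀ u ∈ U, ∀ w ∈ W, T u w) :
    ((∀ v : V, T v v → v = 0) ↔
      ((∀ U : Submodule K V, IsLowerSet {W | TG U W}) ∧
       (∀ U W₁ W₂ : Submodule K V, TG U W₁ → TG U W₂ → TG U (W₁ ⊔ W₂)) ∧
       (∀ U W : Submodule K V, TG U W → U ⊓ W = ⊥))) ∧
    (((∀ v : V, T v v → v = 0) ∧
        ∀ U : Submodule K V, U ≠ ⊤ → {v : V | ∀ u ∈ U, T u v} ≠ ({0} : Set V)) ↔
      IsStronglySepLoc TG) ∧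
    (((∀ v : V, T v v → v = 0) ∧
        ∀ U : Submodule K V, U ≠ ⊤ → {v : V | ∀ u ∈ U, T u v} ≠ ({0} : Set V)) →
      ∀ F : Submodule K V → Submodule K V,
        (∀ U : Submodule K V, (F U : Set V) = {v | ∀ u ∈ U, T u v}) →
        IsOrthocompl F) := by
  have hT : IsVectorSpaceLocality K T := ⟨hsym, hsub⟩
  obtain rfl : TG = subspaceRel K T := funext₂ fun U W => propext (hTG U W)
  have hpolar_ne_bot (U : Submodule K V) :
      {v : V | ∀ u ∈ U, T u v} ≠ ({0} : Set V) ↔ hT.polar U ≠ ⊥ := by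
    rw [← Submodule.bot_coe (R := K)]
    exact (SetLike.coe_set_eq (p := hT.polar U)).not
  simp only [hpolar_ne_bot]
  refine ⟨⟨fun hnd => ⟨hT.isLowerSet_setOf_subspaceRel, fun _ _ _ => hT.subspaceRel_sup,
      fun _ _ => hT.subspaceRel_disjoint hnd⟩,
    fun h _ => hT.eq_zero_of_rel_self_of_subspaceRel_disjoint h.2.2⟩,
    ⟨fun h => hT.isStronglySepLoc_subspaceRel h.1 h.2,
      fun h => ⟨fun _ => hT.eq_zero_of_rel_self_of_subspaceRel_disjoint h.2.2.2.1,
        fun _ => hT.polar_ne_bot_of_isStronglySepLoc h⟩⟩, ?_⟩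
  rintro ⟨hnd, hstrong⟩ F hF
  obtain rfl : F = fun U : Submodule K V => hT.polar U :=
    funext fun U => SetLike.coe_injective (hF U)
  exact hT.isOrthocompl_polar hnd hstrong

/-- For a vector-space locality relation `T` on a finite-dimensional vector
space `V` with induced relation `TG` on the subspace lattice:
(1) `T` is non-degenerate iff `TG` is a lattice locality relation with the separating
property; (2) `T` is strongly non-degenerate iff `TG` is strongly separating; in that
case `U ↦ U^⊤` is an orthocomplementation on `G(V)`. -/
theorem stmt_17 {K V : Type*} [Field K] [AddCommGroup V] [Module K V]
    [FiniteDimensional K V] (T : V → V → Prop)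
    (hsym : ∀ a b : V, T a b → T b a)
    (hsub : ∀ X : Set V, ∃ W : Submodule K V, (W : Set V) = {v | ∀ x ∈ X, T x v})
    (TG : Submodule K V → Submodule K V → Prop)
    (hTG : ∀ U W : Submodule K V, TG U W ↔ ∀ u ∈ U, ∀ w ∈ W, T u w) :
    ((∀ v : V, T v v → v = 0) ↔
      ((∀ U : Submodule K V, IsLowerSet {W | TG U W}) ∧
       (∀ U W₁ W₂ : Submodule K V, TG U W₁ → TG U W₂ → TG U (W₁ ⊔ W₂)) ∧
       (∀ U W : Submodule K V, TG U W → U ⊓ W = ⊥))) ∧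
    (((∀ v : V, T v v → v = 0) ∧
        ∀ U : Submodule K V, U ≠ ⊤ → {v : V | ∀ u ∈ U, T u v} ≠ ({0} : Set V)) ↔
      IsStronglySepLoc TG) ∧
    (((∀ v : V, T v v → v = 0) ∧
        ∀ U : Submodule K V, U ≠ ⊤ → {v : V | ∀ u ∈ U, T u v} ≠ ({0} : Set V)) →
      ∀ F : Submodule K V → Submodule K V,
        (∀ U : Submodule K V, (F U : Set V) = {v | ∀ u ∈ U, T u v}) →
        IsOrthocompl F) :=
  stmt_17_general T hsym hsub TG hTG
end
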